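/- Let r and n be positive integers with gcd(r,n) = 1, let a ∈ ℂ be nonzero, and let α = a·ω^{−r} + X with X ∈ 𝔦^{−r+1}. Let D be a diagonal matrix with complex entries whose trace equals the z⁰-coefficient of Tr(α). Then there exists h ∈ I¹ such that Res(h α h^{−1} dz/z) = Res(a·ω^{−r} dz/z) + D, where Res(Y dz/z) denotes the matrix of z⁰-coefficients of the entries of Y ∈ M_n(F). -/

import Mathlib

noncomputable section

/-- The field `F = ℂ((z))` of formal Laurent series. -/
abbrev F : Type := LaurentSeries ℂ

/-- The element `z ∈ F`. -/
def zF : F := HahnSeries.single 1 1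

/-- The element `z⁻¹ ∈ F`. -/
def zInv : F := HahnSeries.single (-1) 1

/-- The matrix `ω ∈ M_n(F)`: `1` in each entry `(i, i+1)`, `z` in entry `(n, 1)`,
and `0` elsewhere (1-indexed); for `n = 1`, `ω = (z)`. -/
def omegaMat (n : ℕ) : Matrix (Fin n) (Fin n) F :=
  Matrix.of fun i j =>
    if (j : ℕ) = (i : ℕ) + 1 then 1
    else if (i : ℕ) = n - 1 ∧ (j : ℕ) = 0 then zF else 0

/-- The matrix `ω⁻¹ ∈ M_n(F)`: `1` in each entry `(i+1, i)`, `z⁻¹` in entry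
`(1, n)`, and `0` elsewhere (1-indexed); for `n = 1`, `ω⁻¹ = (z⁻¹)`. -/
def omegaInv (n : ℕ) : Matrix (Fin n) (Fin n) F :=
  Matrix.of fun i j =>
    if (i : ℕ) = (j : ℕ) + 1 then 1
    else if (i : ℕ) = 0 ∧ (j : ℕ) = n - 1 then zInv else 0

/-- Membership in the `m`-th step `𝔦^m = ω^m 𝔦⁰` of the standard Iwahori filtration
on `M_n(F)`: `X ∈ 𝔦^m` iff the `(i,j)` entry has `z^k`-coefficient `0` whenever
`n·k < m + i - j`. -/
def iwahoriMem (n : ℕ) (m : ℤ) (X : Matrix (Fin n) (Fin n) F) : Prop :=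
  ∀ i j : Fin n, ∀ k : ℤ,
    (n : ℤ) * k < m + ((i : ℕ) : ℤ) - ((j : ℕ) : ℤ) → (X i j).coeff k = 0

/-- Membership in the standard Iwahori subgroup `I ⊂ GL_n(𝔬)`: all entries in
`𝔬 = ℂ[[z]]`, constant term upper triangular (this is `g ∈ 𝔦⁰`) and the constant
term invertible (nonzero diagonal entries at `z = 0`). -/
def memIwahoriGroup (n : ℕ) (g : Matrix (Fin n) (Fin n) F) : Prop :=
  iwahoriMem n 0 g ∧ ∀ i : Fin n, (g i i).coeff 0 ≠ 0

/-- `Res(X dz/z)`: the matrix of `z⁰`-coefficients of the entries of `X`. -/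
def resMat (n : ℕ) (X : Matrix (Fin n) (Fin n) F) : Matrix (Fin n) (Fin n) ℂ :=
  Matrix.of fun i j => (X i j).coeff 0

-- coefficient extraction as additive hom
def cf (k : ℤ) : F →+ ℂ where
  toFun x := x.coeff k
  map_zero' := rfl
  map_add' _ _ := rfl

lemma iwa_add {n m} {A B : Matrix (Fin n) (Fin n) F} (hA : iwahoriMem n m A)
    (hB : iwahoriMem n m B) : iwahoriMem n m (A + B) := by
  intro i j k h
  have : (A + B) i j = A i j + B i j := rfl
  rw [this, HahnSeries.coeff_add, hA i j k h, hB i j k h, add_zero]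

lemma iwa_neg {n m} {A : Matrix (Fin n) (Fin n) F} (hA : iwahoriMem n m A) :
    iwahoriMem n m (-A) := by
  intro i j k h
  have : (-A) i j = -(A i j) := rfl
  rw [this, HahnSeries.coeff_neg, hA i j k h, neg_zero]

lemma iwa_sub {n m} {A B : Matrix (Fin n) (Fin n) F} (hA : iwahoriMem n m A)
    (hB : iwahoriMem n m B) : iwahoriMem n m (A - B) := by
  rw [sub_eq_add_neg]; exact iwa_add hA (iwa_neg hB)

lemma iwa_mono {n} {m m' : ℤ} (h : m' ≤ m) {A : Matrix (Fin n) (Fin n) F}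
    (hA : iwahoriMem n m A) : iwahoriMem n m' A := by
  intro i j k hk
  exact hA i j k (by omega)

lemma iwa_mul {n} {m m' : ℤ} {A B : Matrix (Fin n) (Fin n) F}
    (hA : iwahoriMem n m A) (hB : iwahoriMem n m' B) :
    iwahoriMem n (m + m') (A * B) := by
  intro i j k hk
  rw [Matrix.mul_apply]
  rw [show (∑ j_1 : Fin n, A i j_1 * B j_1 j).coeff k = ∑ t : Fin n, ((A i t) * (B t j)).coeff k from map_sum (cf k) _ _]
  refine Finset.sum_eq_zero fun t _ => ?_
  show ((A i t) * (B t j)).coeff k = 0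
  rw [HahnSeries.coeff_mul]
  refine Finset.sum_eq_zero fun p hp => ?_
  rw [Finset.mem_addAntidiagonal] at hp
  obtain ⟨h1, h2, h3⟩ := hp
  by_cases hc : (n : ℤ) * p.1 < m + ((i : ℕ) : ℤ) - ((t : ℕ) : ℤ)
  · rw [hA i t p.1 hc, zero_mul]
  · have : (n : ℤ) * p.2 < m' + ((t : ℕ) : ℤ) - ((j : ℕ) : ℤ) := by
      have := h3 ▸ hk
      have hmul : (n:ℤ) * p.1 + (n:ℤ)*p.2 = (n:ℤ)*(p.1+p.2) := by ring
      omega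
    rw [hB t j p.2 this, mul_zero]

def Mmat (n : ℕ) (m : ℤ) (c : ZMod n → ℂ) : Matrix (Fin n) (Fin n) F :=
  Matrix.of fun i j =>
    if (n : ℤ) ∣ (m + ((i : ℕ) : ℤ) - ((j : ℕ) : ℤ)) then
      HahnSeries.single ((m + ((i : ℕ) : ℤ) - ((j : ℕ) : ℤ)) / n) (c ((i : ℕ) : ZMod n))
    else 0

variable {n : ℕ}

lemma Mmat_coeff (hn : 0 < n) (m : ℤ) (c : ZMod n → ℂ) (i j : Fin n) (k : ℤ) :
    (Mmat n m c i j).coeff k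
      = if (n : ℤ) * k = m + ((i : ℕ) : ℤ) - ((j : ℕ) : ℤ) then c ((i : ℕ) : ZMod n)
        else 0 := by
  have hn' : (n : ℤ) ≠ 0 := by exact_mod_cast hn.ne'
  unfold Mmat
  rw [Matrix.of_apply]
  split_ifs with h1 h2 h2
  · obtain ⟨q, hq⟩ := h1
    rw [hq, Int.mul_ediv_cancel_left _ hn', HahnSeries.coeff_single]
    have : k = q := by
      have := h2.trans hq
      exact mul_left_cancel₀ hn' this
    simp [this]
  · obtain ⟨q, hq⟩ := h1
    rw [hq, Int.mul_ediv_cancel_left _ hn', HahnSeries.coeff_single]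
    have : ¬ k = q := fun h => h2 (by rw [h, hq])
    simp [this]
  · exact absurd ⟨k, h2.symm⟩ h1
  · rfl

lemma dvd_iff_zmod (m : ℤ) (i t : Fin n) :
    (n : ℤ) ∣ (m + ((i : ℕ) : ℤ) - ((t : ℕ) : ℤ)) ↔
      ((t : ℕ) : ZMod n) = ((i : ℕ) : ZMod n) + (m : ZMod n) := by
  rw [← ZMod.intCast_zmod_eq_zero_iff_dvd]
  push_cast
  constructor
  · intro h
    have := sub_eq_zero.mp h
    rw [← this]; ring
  · intro h
    rw [h]; ring

lemma fin_eq_iff_zmod (hn : 0 < n) (t t' : Fin n) :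
    t = t' ↔ ((t : ℕ) : ZMod n) = ((t' : ℕ) : ZMod n) := by
  constructor
  · rintro rfl; rfl
  · intro h
    have h1 : ((t:ℕ) : ZMod n).val = ((t':ℕ) : ZMod n).val := by rw [h]
    rw [ZMod.val_natCast_of_lt t.isLt, ZMod.val_natCast_of_lt t'.isLt] at h1
    exact Fin.ext h1

lemma Mmat_mul (hn : 0 < n) (m m' : ℤ) (c c' : ZMod n → ℂ) :
    Mmat n m c * Mmat n m' c'
      = Mmat n (m + m') (fun p => c p * c' (p + (m : ZMod n))) := by
  haveI : NeZero n := ⟨hn.ne'⟩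
  refine Matrix.ext fun i j => ?_
  rw [Matrix.mul_apply]
  set x : ZMod n := ((i : ℕ) : ZMod n) + (m : ZMod n) with hx
  set t₀ : Fin n := ⟨x.val, ZMod.val_lt x⟩ with ht₀
  have ht₀x : ((t₀ : ℕ) : ZMod n) = x := by
    rw [ht₀]; exact ZMod.natCast_rightInverse x
  rw [Finset.sum_eq_single t₀]
  · -- main term
    have hdvd1 : (n : ℤ) ∣ (m + ((i : ℕ) : ℤ) - ((t₀ : ℕ) : ℤ)) :=
      (dvd_iff_zmod m i t₀).mpr ht₀x
    show (Mmat n m c i t₀) * (Mmat n m' c' t₀ j) = _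
    unfold Mmat
    rw [Matrix.of_apply, Matrix.of_apply, Matrix.of_apply, if_pos hdvd1]
    by_cases h2 : (n : ℤ) ∣ (m' + ((t₀ : ℕ) : ℤ) - ((j : ℕ) : ℤ))
    · have h3 : (n : ℤ) ∣ (m + m' + ((i : ℕ) : ℤ) - ((j : ℕ) : ℤ)) := by
        have := Dvd.dvd.add hdvd1 h2
        have e : m + m' + ((i : ℕ) : ℤ) - ((j : ℕ) : ℤ) = (m + ((i : ℕ) : ℤ) - ((t₀ : ℕ) : ℤ)) + (m' + ((t₀ : ℕ) : ℤ) - ((j : ℕ) : ℤ)) := by ring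
        rw [e]; exact this
      rw [if_pos h2, if_pos h3, HahnSeries.single_mul_single]
      obtain ⟨q1, hq1⟩ := hdvd1
      obtain ⟨q2, hq2⟩ := h2
      have hn' : (n : ℤ) ≠ 0 := by exact_mod_cast hn.ne'
      have hsum : m + m' + ((i : ℕ) : ℤ) - ((j : ℕ) : ℤ) = (n:ℤ) * (q1 + q2) := by
        rw [mul_add, ← hq1, ← hq2]; ring
      rw [hq1, hq2, hsum, Int.mul_ediv_cancel_left _ hn', Int.mul_ediv_cancel_left _ hn',
        Int.mul_ediv_cancel_left _ hn', ht₀x]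
    · have h3 : ¬ (n : ℤ) ∣ (m + m' + ((i : ℕ) : ℤ) - ((j : ℕ) : ℤ)) := by
        intro h
        apply h2
        have := Dvd.dvd.sub h hdvd1
        have e : m' + ((t₀ : ℕ) : ℤ) - ((j : ℕ) : ℤ) = (m + m' + ((i : ℕ) : ℤ) - ((j : ℕ) : ℤ)) - (m + ((i : ℕ) : ℤ) - ((t₀ : ℕ) : ℤ)) := by ring
        rw [e]; exact this
      rw [if_neg h2, if_neg h3, mul_zero]
  · intro t _ hne
    show (Mmat n m c i t) * (Mmat n m' c' t j) = 0
    have : ¬ (n : ℤ) ∣ (m + ((i : ℕ) : ℤ) - ((t : ℕ) : ℤ)) := by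
      rw [dvd_iff_zmod]
      intro h
      exact hne ((fin_eq_iff_zmod hn t t₀).mpr (h.trans ht₀x.symm))
    unfold Mmat
    rw [Matrix.of_apply, if_neg this, zero_mul]
  · intro h
    exact absurd (Finset.mem_univ t₀) h



lemma dvd_small (hn : 0 < n) {x : ℤ} (h : (n:ℤ) ∣ x) (h1 : -(n:ℤ) ≤ x) (h2 : x < n) :
    x = 0 ∨ x = -n := by
  obtain ⟨q, rfl⟩ := h
  have hq : q = 0 ∨ q = -1 := by
    rcases lt_trichotomy q 0 with h' | h' | h'
    · right
      by_contra hq1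
      have : q ≤ -2 := by omega
      nlinarith [Int.natCast_pos.mpr hn]
    · left; exact h'
    · exfalso; nlinarith [Int.natCast_pos.mpr hn]
  rcases hq with rfl | rfl
  · left; ring
  · right; ring

lemma Mmat_one (hn : 0 < n) : Mmat n 0 (fun _ => 1) = 1 := by
  refine Matrix.ext fun i j => ?_
  unfold Mmat
  rw [Matrix.of_apply]
  by_cases h : i = j
  · subst h
    rw [if_pos (by simp), Matrix.one_apply_eq]
    simp
  · have hi := i.isLt
    have hj := j.isLt
    have hij : ((i:ℕ):ℤ) - ((j:ℕ):ℤ) ≠ 0 := by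
      intro hc; exact h (Fin.ext (by omega))
    have : ¬ (n : ℤ) ∣ (0 + ((i : ℕ) : ℤ) - ((j : ℕ) : ℤ)) := by
      intro hd
      rcases dvd_small hn hd (by omega) (by omega) with h0 | h0 <;> omega
    rw [if_neg this, Matrix.one_apply_ne h]

lemma omegaInv_eq (hn : 0 < n) : omegaInv n = Mmat n (-1) (fun _ => 1) := by
  refine Matrix.ext fun i j => ?_
  unfold omegaInv Mmat
  rw [Matrix.of_apply, Matrix.of_apply]
  have hi := i.isLt
  have hj := j.isLt
  by_cases h1 : (i : ℕ) = (j : ℕ) + 1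
  · rw [if_pos h1]
    have hd : (-1 + ((i:ℕ):ℤ) - ((j:ℕ):ℤ)) = 0 := by omega
    rw [if_pos (by rw [hd]; exact dvd_zero _), hd]
    simp
  · rw [if_neg h1]
    by_cases h2 : (i : ℕ) = 0 ∧ (j : ℕ) = n - 1
    · rw [if_pos h2]
      have hd : (-1 + ((i:ℕ):ℤ) - ((j:ℕ):ℤ)) = -n := by omega
      rw [if_pos (by rw [hd]; exact ⟨-1, by ring⟩), hd]
      have : (-(n:ℤ)) / n = -1 := by
        rw [show -(n:ℤ) = (n:ℤ) * (-1) by ring,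
          Int.mul_ediv_cancel_left _ (by exact_mod_cast hn.ne')]
      rw [this]
      rfl
    · rw [if_neg h2]
      have : ¬ (n : ℤ) ∣ (-1 + ((i : ℕ) : ℤ) - ((j : ℕ) : ℤ)) := by
        intro hd
        rcases dvd_small hn hd (by omega) (by omega) with h0 | h0 <;> omega
      rw [if_neg this]

lemma Mmat_mem (hn : 0 < n) (m : ℤ) (c : ZMod n → ℂ) : iwahoriMem n m (Mmat n m c) := by
  intro i j k hk
  rw [Mmat_coeff hn]
  rw [if_neg (by omega)]

lemma Mmat_sub (m : ℤ) (c c' : ZMod n → ℂ) :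
    Mmat n m c - Mmat n m c' = Mmat n m (c - c') := by
  refine Matrix.ext fun i j => ?_
  show Mmat n m c i j - Mmat n m c' i j = _
  unfold Mmat
  rw [Matrix.of_apply, Matrix.of_apply, Matrix.of_apply]
  split_ifs with h
  · ext k
    rw [HahnSeries.coeff_sub, HahnSeries.coeff_single, HahnSeries.coeff_single,
      HahnSeries.coeff_single]
    split_ifs <;> simp
  · rw [sub_zero]

lemma omegaInv_pow (hn : 0 < n) (r : ℕ) :
    (omegaInv n) ^ r = Mmat n (-(r : ℤ)) (fun _ => 1) := by
  induction r with
  | zero =>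
    rw [pow_zero, show (-((0:ℕ):ℤ)) = 0 from by norm_num]
    exact (Mmat_one hn).symm
  | succ r ih =>
    rw [pow_succ, ih, omegaInv_eq hn, Mmat_mul hn,
      show (-(r:ℤ)) + -1 = -(((r+1:ℕ)):ℤ) from by push_cast; ring]
    congr 1
    funext p
    ring

lemma algebraMap_smul_Mmat (a : ℂ) (m : ℤ) (c : ZMod n → ℂ) :
    algebraMap ℂ F a • Mmat n m c = Mmat n m (fun p => a * c p) := by
  refine Matrix.ext fun i j => ?_
  show algebraMap ℂ F a • Mmat n m c i j = _
  unfold Mmat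
  rw [Matrix.of_apply, Matrix.of_apply]
  have halg : algebraMap ℂ F a = HahnSeries.single 0 a := by
    have h : (algebraMap ℂ F) = (algebraMap (PowerSeries ℂ)
        (LaurentSeries ℂ)).comp (algebraMap ℂ (PowerSeries ℂ)) := rfl
    rw [h, RingHom.comp_apply,
      show algebraMap ℂ (PowerSeries ℂ) a = PowerSeries.C a from rfl,
      LaurentSeries.coe_algebraMap]
    exact HahnSeries.ofPowerSeries_C a
  split_ifs with h
  · rw [smul_eq_mul, halg, HahnSeries.single_mul_single, zero_add]
  · simp

lemma ofPS_coeff_neg (x : PowerSeries ℂ) (k : ℤ) (hk : k < 0) :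
    (HahnSeries.ofPowerSeries ℤ ℂ x).coeff k = 0 := by
  rw [HahnSeries.ofPowerSeries_apply]
  apply HahnSeries.embDomain_notin_range
  rintro ⟨m, hm⟩
  have hm' : ((m : ℕ) : ℤ) = k := hm
  omega

lemma ofPS_coeff_nat (x : PowerSeries ℂ) (k : ℤ) (hk : 0 ≤ k) :
    (HahnSeries.ofPowerSeries ℤ ℂ x).coeff k = PowerSeries.coeff k.toNat x := by
  have : k = ((k.toNat : ℕ) : ℤ) := by omega
  rw [this]
  exact HahnSeries.ofPowerSeries_apply_coeff x k.toNat

lemma exists_inverse (hn : 0 < n) {g : Matrix (Fin n) (Fin n) F}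
    (hg : iwahoriMem n 1 (g - 1)) :
    ∃ u, g * u = 1 ∧ u * g = 1 ∧ iwahoriMem n 1 (u - 1) := by
  classical
  -- entries of g have no negative coefficients
  have hgO : ∀ i j : Fin n, ∀ k : ℤ, k < 0 → (g i j).coeff k = 0 := by
    intro i j k hk
    have h1 : (g i j).coeff k = ((g - 1) i j).coeff k + ((1 : Matrix (Fin n) (Fin n) F) i j).coeff k := by
      have : g i j = (g - 1) i j + (1 : Matrix (Fin n) (Fin n) F) i j := by
        simp [Matrix.sub_apply]
      rw [this, HahnSeries.coeff_add]
    rw [h1]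
    have hij1 := i.isLt
    have hij2 := j.isLt
    have hnk : (n:ℤ) * k ≤ -(n:ℤ) := by nlinarith
    rw [hg i j k (by omega)]
    have : ((1 : Matrix (Fin n) (Fin n) F) i j).coeff k = 0 := by
      by_cases hij : i = j
      · subst hij
        rw [Matrix.one_apply_eq]
        rw [show (1 : F) = HahnSeries.single 0 1 from rfl, HahnSeries.coeff_single]
        rw [if_neg (by omega)]
      · rw [Matrix.one_apply_ne hij]; rfl
    rw [this, add_zero]
  -- the power series matrix
  set P : Matrix (Fin n) (Fin n) (PowerSeries ℂ) :=
    Matrix.of fun i j => PowerSeries.mk (fun k => (g i j).coeff k) with hP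
  have hmap : P.map (HahnSeries.ofPowerSeries ℤ ℂ) = g := by
    refine Matrix.ext fun i j => ?_
    rw [Matrix.map_apply]
    ext k
    rcases lt_or_ge k 0 with hk | hk
    · rw [ofPS_coeff_neg _ _ hk, hgO i j k hk]
    · rw [ofPS_coeff_nat _ _ hk]
      rw [hP, Matrix.of_apply, PowerSeries.coeff_mk]
      congr 1
      omega
  -- constant coefficient matrix
  set P0 : Matrix (Fin n) (Fin n) ℂ := P.map (PowerSeries.constantCoeff) with hP0
  have hP0e : ∀ i j, P0 i j = (g i j).coeff 0 := by
    intro i j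
    rw [hP0, Matrix.map_apply, hP, Matrix.of_apply]
    simp [PowerSeries.constantCoeff_mk]
  have hgup : ∀ i j : Fin n, (j : ℕ) ≤ (i : ℕ) → (g i j).coeff 0
      = if i = j then 1 else 0 := by
    intro i j hij
    have h0 := hg i j 0 (by push_cast; omega)
    have : (g i j).coeff 0 = ((1 : Matrix (Fin n) (Fin n) F) i j).coeff 0 := by
      have hsplit : g i j = (g - 1) i j + (1 : Matrix (Fin n) (Fin n) F) i j := by
        simp [Matrix.sub_apply]
      rw [hsplit, HahnSeries.coeff_add, h0, zero_add]
    rw [this]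
    by_cases hij' : i = j
    · subst hij'
      rw [Matrix.one_apply_eq, if_pos rfl, HahnSeries.coeff_one]
      simp
    · rw [Matrix.one_apply_ne hij', if_neg hij']
      rfl
  have hP0tri : P0.BlockTriangular id := by
    intro i j hij
    have hij' : (j : ℕ) < (i : ℕ) := hij
    rw [hP0e, hgup i j (le_of_lt hij'), if_neg (by intro h; subst h; omega)]
  have hP0diag : ∀ i, P0 i i = 1 := by
    intro i
    rw [hP0e, hgup i i le_rfl, if_pos rfl]
  have hdet0 : P0.det = 1 := by
    rw [Matrix.det_of_upperTriangular hP0tri]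
    exact Finset.prod_eq_one fun i _ => hP0diag i
  have hdet : IsUnit P.det := by
    rw [PowerSeries.isUnit_iff_constantCoeff]
    have : PowerSeries.constantCoeff P.det = P0.det := by
      rw [hP0, ← RingHom.mapMatrix_apply, ← RingHom.map_det]
    rw [this, hdet0]
    exact isUnit_one
  have hPunit : IsUnit P := (Matrix.isUnit_iff_isUnit_det P).mpr hdet
  obtain ⟨w, hw⟩ := hPunit
  set Q : Matrix (Fin n) (Fin n) (PowerSeries ℂ) := ↑w⁻¹ with hQ
  have hPQ : P * Q = 1 := by rw [hQ, ← hw]; exact w.mul_inv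
  have hQP : Q * P = 1 := by rw [hQ, ← hw]; exact w.inv_mul
  set u : Matrix (Fin n) (Fin n) F := Q.map (HahnSeries.ofPowerSeries ℤ ℂ) with hu
  have hmul : ∀ (A B : Matrix (Fin n) (Fin n) (PowerSeries ℂ)),
      (A * B).map (HahnSeries.ofPowerSeries ℤ ℂ)
        = A.map (HahnSeries.ofPowerSeries ℤ ℂ) * B.map (HahnSeries.ofPowerSeries ℤ ℂ) := by
    intro A B
    rw [← RingHom.mapMatrix_apply, ← RingHom.mapMatrix_apply, ← RingHom.mapMatrix_apply, map_mul]
  have hone : (1 : Matrix (Fin n) (Fin n) (PowerSeries ℂ)).map (HahnSeries.ofPowerSeries ℤ ℂ)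
      = 1 := by
    rw [← RingHom.mapMatrix_apply, map_one]
  have hgu : g * u = 1 := by rw [← hmap, hu, ← hmul, hPQ, hone]
  have hug : u * g = 1 := by rw [← hmap, hu, ← hmul, hQP, hone]
  refine ⟨u, hgu, hug, ?_⟩
  -- constant coefficient of Q
  set Q0 : Matrix (Fin n) (Fin n) ℂ := Q.map (PowerSeries.constantCoeff) with hQ0
  have hmapc : ∀ (A B : Matrix (Fin n) (Fin n) (PowerSeries ℂ)),
      (A * B).map (PowerSeries.constantCoeff)
        = A.map (PowerSeries.constantCoeff) * B.map (PowerSeries.constantCoeff) := by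
    intro A B
    rw [← RingHom.mapMatrix_apply, ← RingHom.mapMatrix_apply, ← RingHom.mapMatrix_apply, map_mul]
  have hQ0P0 : Q0 * P0 = 1 := by
    rw [hQ0, hP0, ← hmapc, hQP, ← RingHom.mapMatrix_apply, map_one]
  have hP0Q0 : P0 * Q0 = 1 := by
    rw [hQ0, hP0, ← hmapc, hPQ, ← RingHom.mapMatrix_apply, map_one]
  haveI : Invertible P0 := invertibleOfLeftInverse P0 _ hQ0P0
  have hQ0tri : Q0.BlockTriangular id := by
    have h1 : P0⁻¹ = Q0 := Matrix.inv_eq_left_inv hQ0P0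
    rw [← h1]
    exact Matrix.blockTriangular_inv_of_blockTriangular hP0tri
  have hQ0diag : ∀ i, Q0 i i = 1 := by
    intro i
    have h1 : (Q0 * P0) i i = 1 := by rw [hQ0P0, Matrix.one_apply_eq]
    rw [Matrix.mul_apply] at h1
    rw [Finset.sum_eq_single i] at h1
    · rwa [hP0diag, mul_one] at h1
    · intro t _ hti
      rcases lt_or_gt_of_ne (fun h => hti (Fin.ext h) : (t:ℕ) ≠ (i:ℕ)) with h | h
      · rw [hQ0tri (show id t < id i from h), zero_mul]
      · rw [hP0tri (show id i < id t from h), mul_zero]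
    · intro h; exact absurd (Finset.mem_univ i) h
  -- now prove iwahori membership of u - 1
  intro i j k hk
  have hij1 := i.isLt
  have hij2 := j.isLt
  have husplit : ((u - 1) i j).coeff k = (u i j).coeff k
      - ((1 : Matrix (Fin n) (Fin n) F) i j).coeff k := by
    rw [Matrix.sub_apply, HahnSeries.coeff_sub]
  rw [husplit]
  have hk0 : k ≤ 0 := by by_contra h; push_neg at h; nlinarith
  rcases lt_or_ge k 0 with hkneg | hkpos
  · rw [hu, Matrix.map_apply, ofPS_coeff_neg _ _ hkneg]
    have : ((1 : Matrix (Fin n) (Fin n) F) i j).coeff k = 0 := by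
      by_cases hij : i = j
      · subst hij
        rw [Matrix.one_apply_eq, show (1 : F) = HahnSeries.single 0 1 from rfl,
          HahnSeries.coeff_single, if_neg (by omega)]
      · rw [Matrix.one_apply_ne hij]; rfl
    rw [this, sub_zero]
  · have hk00 : k = 0 := by omega
    subst hk00
    have hji : (j : ℕ) ≤ (i : ℕ) := by omega
    have hu0 : (u i j).coeff 0 = Q0 i j := by
      rw [hu, Matrix.map_apply, ofPS_coeff_nat _ _ le_rfl, hQ0, Matrix.map_apply,
        show Int.toNat 0 = 0 from rfl, PowerSeries.coeff_zero_eq_constantCoeff]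
    rw [hu0]
    by_cases hij : i = j
    · subst hij
      rw [hQ0diag, Matrix.one_apply_eq]
      rw [show ((1:F)).coeff 0 = 1 by rw [HahnSeries.coeff_one]; simp]
      ring
    · have : (j : ℕ) < (i : ℕ) := by
        rcases Nat.lt_or_ge (j : ℕ) (i : ℕ) with h | h
        · exact h
        · exact absurd (Fin.ext (by omega)) hij
      rw [hQ0tri (show id j < id i from this), Matrix.one_apply_ne hij]
      rw [show ((0:F)).coeff 0 = 0 from rfl]
      ring

lemma sum_range_zmod [NeZero n] (f : ZMod n → ℂ) (hn : 0 < n) :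
    ∑ j ∈ Finset.range n, f ((j : ℕ) : ZMod n) = ∑ x : ZMod n, f x := by
  refine Finset.sum_nbij' (fun j => ((j : ℕ) : ZMod n)) (fun x => x.val) ?_ ?_ ?_ ?_ ?_
  · intro a _; exact Finset.mem_univ _
  · intro x _; exact Finset.mem_range.mpr (ZMod.val_lt x)
  · intro a ha; exact ZMod.val_natCast_of_lt (Finset.mem_range.mp ha)
  · intro x _; exact ZMod.natCast_rightInverse x
  · intro a _; rfl

lemma cyclic_solve [NeZero n] (hn : 0 < n) (r : ℕ) (hcop : Nat.Coprime r n) (e : ZMod n → ℂ)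
    (he : ∑ p : ZMod n, e p = 0) :
    ∃ c : ZMod n → ℂ, ∀ p : ZMod n, c p - c (p - (r : ZMod n)) = e p := by
  set s : ZMod n := (r : ZMod n) with hs
  have hsu : IsUnit s := (ZMod.isUnit_iff_coprime r n).mpr hcop
  obtain ⟨v, hv⟩ := hsu
  set Cfun : ZMod n → ℂ := fun m => ∑ j ∈ Finset.range (m.val + 1), e (((j : ℕ) : ZMod n) * s)
    with hC
  refine ⟨fun x => Cfun (x * ↑v⁻¹), fun p => ?_⟩
  obtain ⟨m, hm⟩ : ∃ m : ZMod n, m = p * ↑v⁻¹ := ⟨_, rfl⟩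
  have hp : p = m * s := by
    rw [hm, mul_assoc, ← hv, Units.inv_mul, mul_one]
  have hps : (p - s) * ↑v⁻¹ = m - 1 := by
    rw [sub_mul, ← hm, ← hv, Units.mul_inv]
  have key : Cfun m - Cfun (m - 1) = e (m * s) := by
    by_cases hm0 : m = 0
    · subst hm0
      have h1 : Cfun 0 = e 0 := by
        rw [hC]
        simp [ZMod.val_zero]
      have h2 : Cfun (0 - 1) = 0 := by
        rw [hC]
        have hval : (0 - 1 : ZMod n).val = n - 1 := by
          rw [zero_sub]
          cases n with
          | zero => omega
          | succ k => exact ZMod.val_neg_one k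
        simp only [hval]
        have hrange : n - 1 + 1 = n := by omega
        rw [hrange]
        have := sum_range_zmod (fun x => e (x * s)) hn
        rw [this]
        calc ∑ x : ZMod n, e (x * s) = ∑ x : ZMod n, e x :=
              Fintype.sum_bijective _ (Units.mulRight_bijective v) _ _
                (fun x => by rw [hv])
          _ = 0 := he
      rw [h1, h2, sub_zero, zero_mul]
    · have hval1 : 1 ≤ m.val := by
        rcases Nat.eq_zero_or_pos m.val with h | h
        · exact absurd (by rw [← ZMod.natCast_rightInverse m, h]; simp) hm0
        · exact h
      have hm1 : m - 1 = (((m.val - 1 : ℕ)) : ZMod n) := by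
        rw [Nat.cast_sub hval1]
        simp only [Nat.cast_one]
        rw [ZMod.natCast_rightInverse m]
      have hval2 : (m - 1).val = m.val - 1 := by
        rw [hm1, ZMod.val_natCast_of_lt (by have := ZMod.val_lt m; omega)]
      rw [hC]
      simp only [hval2]
      have hsucc : m.val - 1 + 1 = m.val := by omega
      rw [show m.val + 1 = (m.val - 1 + 1) + 1 by omega, Finset.sum_range_succ, hsucc]
      have : ((m.val : ℕ) : ZMod n) = m := ZMod.natCast_rightInverse m
      rw [this]
      ring
  rw [← hp] at key
  show Cfun (p * ↑v⁻¹) - Cfun ((p - s) * ↑v⁻¹) = e p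
  rw [← hm, hps]
  exact key

def stepFun (n : ℕ) [NeZero n] (ℓ : ℤ) (G : Fin n → Fin n → ℂ) (p : ZMod n) : ℂ :=
  if 0 ≤ (p.val : ℤ) + ℓ ∧ (p.val : ℤ) + ℓ < (n : ℤ) then
    G ⟨p.val, ZMod.val_lt p⟩ ⟨((p.val : ℤ) + ℓ).toNat % n, Nat.mod_lt _ (NeZero.pos n)⟩
  else 0

lemma stepFun_eval [NeZero n] (ℓ : ℤ) (G : Fin n → Fin n → ℂ) (i j : Fin n)
    (hij : ((j:ℕ):ℤ) - ((i:ℕ):ℤ) = ℓ) :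
    stepFun n ℓ G (((i:ℕ)) : ZMod n) = G i j := by
  unfold stepFun
  have hv : ((((i:ℕ)) : ZMod n)).val = (i:ℕ) := ZMod.val_natCast_of_lt i.isLt
  have hi := i.isLt
  have hj := j.isLt
  rw [if_pos (by rw [hv]; omega)]
  congr 1
  · exact Fin.ext hv
  · refine Fin.ext ?_
    show (((((i:ℕ)) : ZMod n)).val + ℓ : ℤ).toNat % n = (j : ℕ)
    rw [hv]
    have h1 : ((((i:ℕ)):ℤ) + ℓ).toNat = (j : ℕ) := by omega
    rw [h1, Nat.mod_eq_of_lt hj]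

lemma sum_zmod_fin [NeZero n] (G : Fin n → ℂ) :
    ∑ p : ZMod n, G ⟨p.val, ZMod.val_lt p⟩ = ∑ i : Fin n, G i := by
  refine Finset.sum_nbij' (fun p => (⟨p.val, ZMod.val_lt p⟩ : Fin n))
    (fun i => (((i:ℕ)) : ZMod n)) ?_ ?_ ?_ ?_ ?_
  · intro p _; exact Finset.mem_univ _
  · intro i _; exact Finset.mem_univ _
  · intro p _
    exact ZMod.natCast_rightInverse p
  · intro i _
    exact Fin.ext (ZMod.val_natCast_of_lt i.isLt)
  · intro p _; rfl

lemma coeff0_entry_add3 (B Δ R : Matrix (Fin n) (Fin n) F) (i j : Fin n) :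
    ((B + Δ + R) i j).coeff 0 = (B i j).coeff 0 + (Δ i j).coeff 0 + (R i j).coeff 0 := by
  rw [Matrix.add_apply, Matrix.add_apply, HahnSeries.coeff_add, HahnSeries.coeff_add]

lemma iwa1_mul_group {g h : Matrix (Fin n) (Fin n) F} (hn : 0 < n)
    (hg : iwahoriMem n 1 (g - 1)) (hh : iwahoriMem n 1 (h - 1)) :
    iwahoriMem n 1 (g * h - 1) := by
  have hsplit : g * h - 1 = (g - 1) * (h - 1) + (g - 1) + (h - 1) := by
    simp only [sub_mul, mul_sub, one_mul, mul_one]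
    abel
  rw [hsplit]
  exact iwa_add (iwa_add (iwa_mono (by omega) (iwa_mul hg hh)) hg) hh

lemma step_lemma {n r : ℕ} [NeZero n] (hn : 0 < n) (hr : 0 < r) (hcop : Nat.Coprime r n)
    {a : ℂ} (ha : a ≠ 0) (target : Fin n → Fin n → ℂ)
    (ℓ : ℤ) (hℓ : -(r:ℤ) + 1 ≤ ℓ) (B : Matrix (Fin n) (Fin n) F)
    (hB1 : iwahoriMem n (-(r:ℤ)+1) (B - Mmat n (-(r:ℤ)) (fun _ => a)))
    (hB2 : ∀ i j : Fin n, ((j:ℕ):ℤ) - ((i:ℕ):ℤ) < ℓ → (B i j).coeff 0 = target i j)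
    (htr0 : ∑ i : Fin n, (B i i).coeff 0 = ∑ i : Fin n, target i i) :
    ∃ g u, g * u = 1 ∧ u * g = 1 ∧ iwahoriMem n 1 (g - 1) ∧ iwahoriMem n 1 (u - 1) ∧
      iwahoriMem n (-(r:ℤ)+1) (g*B*u - Mmat n (-(r:ℤ)) (fun _ => a)) ∧
      (∀ i j : Fin n, ((j:ℕ):ℤ) - ((i:ℕ):ℤ) < ℓ + 1 → ((g*B*u) i j).coeff 0 = target i j) := by
  classical
  set aT : Matrix (Fin n) (Fin n) F := Mmat n (-(r:ℤ)) (fun _ => a) with haT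
  -- the correction data
  set G : Fin n → Fin n → ℂ := fun i j => (target i j - (B i j).coeff 0) / a with hG
  set e0 : ZMod n → ℂ := stepFun n ℓ G with he0
  set p₀ : ZMod n := if 0 < ℓ then ((n-1 : ℕ) : ZMod n) else 0 with hp₀
  set Sval : ℂ := ∑ p : ZMod n, e0 p with hSval
  have hp₀cond : ℓ ≠ 0 → ¬ (0 ≤ (p₀.val : ℤ) + ℓ ∧ (p₀.val : ℤ) + ℓ < (n : ℤ)) := by
    intro hℓ0
    rw [hp₀]
    split_ifs with hpos
    · rw [ZMod.val_natCast_of_lt (by omega)]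
      intro hcond
      omega
    · rw [ZMod.val_zero]
      intro hcond
      omega
  have hSval0 : ℓ = 0 → Sval = 0 := by
    intro hℓ0
    subst hℓ0
    rw [hSval]
    have heach : ∀ p : ZMod n, e0 p
        = (fun i : Fin n => (target i i - (B i i).coeff 0) / a) ⟨p.val, ZMod.val_lt p⟩ := by
      intro p
      have hcast : ((((⟨p.val, ZMod.val_lt p⟩ : Fin n) : ℕ)) : ZMod n) = p :=
        ZMod.natCast_rightInverse p
      have hev := stepFun_eval (n := n) 0 G ⟨p.val, ZMod.val_lt p⟩ ⟨p.val, ZMod.val_lt p⟩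
        (by omega)
      rw [he0]
      conv_lhs => rw [← hcast]
      rw [hev]
    calc ∑ p : ZMod n, e0 p
        = ∑ p : ZMod n, (fun i : Fin n => (target i i - (B i i).coeff 0) / a)
            ⟨p.val, ZMod.val_lt p⟩ := Finset.sum_congr rfl (fun p _ => heach p)
      _ = ∑ i : Fin n, (target i i - (B i i).coeff 0) / a :=
            sum_zmod_fin (n := n) (fun i : Fin n => (target i i - (B i i).coeff 0) / a)
      _ = (∑ i : Fin n, (target i i - (B i i).coeff 0)) / a := by rw [Finset.sum_div]
      _ = 0 := by
          rw [Finset.sum_sub_distrib, ← htr0, sub_self, zero_div]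
  set e : ZMod n → ℂ := fun p => e0 p - if p = p₀ then Sval else 0 with he
  have hesum : ∑ p : ZMod n, e p = 0 := by
    rw [he]
    rw [Finset.sum_sub_distrib, ← hSval]
    rw [Finset.sum_ite_eq' Finset.univ p₀ (fun _ => Sval), if_pos (Finset.mem_univ _), sub_self]
  have hK2 : ∀ i j : Fin n, ((j:ℕ):ℤ) - ((i:ℕ):ℤ) = ℓ →
      a * e (((i:ℕ)) : ZMod n) = target i j - (B i j).coeff 0 := by
    intro i j hij
    have heval : e0 (((i:ℕ)) : ZMod n) = (target i j - (B i j).coeff 0) / a := by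
      rw [he0]; exact stepFun_eval ℓ G i j hij
    have hcorr : (if (((i:ℕ)) : ZMod n) = p₀ then Sval else 0) = 0 := by
      by_cases hℓ0 : ℓ = 0
      · rw [hSval0 hℓ0, ite_self]
      · rw [if_neg]
        intro hpe
        apply hp₀cond hℓ0
        rw [← hpe]
        have hv : ((((i:ℕ)) : ZMod n)).val = (i:ℕ) := ZMod.val_natCast_of_lt i.isLt
        rw [hv]
        have hj := j.isLt
        omega
    rw [he]
    show a * (e0 (((i:ℕ)) : ZMod n) - if (((i:ℕ)) : ZMod n) = p₀ then Sval else 0)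
      = target i j - (B i j).coeff 0
    rw [hcorr, sub_zero, heval, mul_div_cancel₀ _ ha]
  -- solve the difference equation
  obtain ⟨c, hc⟩ := cyclic_solve hn r hcop e hesum
  set A : Matrix (Fin n) (Fin n) F := Mmat n (ℓ + r) c with hA
  have hAmem : iwahoriMem n (ℓ + (r:ℤ)) A := Mmat_mem hn _ _
  have hA1 : iwahoriMem n 1 A := iwa_mono (by omega) hAmem
  set g : Matrix (Fin n) (Fin n) F := 1 + A with hg
  have hg1 : g - 1 = A := by rw [hg]; exact add_sub_cancel_left 1 A
  have hgmem : iwahoriMem n 1 (g - 1) := by rw [hg1]; exact hA1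
  obtain ⟨u, hgu, hug, humem⟩ := exists_inverse hn hgmem
  -- the commutator with the leading term
  set ff : ZMod n → ℂ := fun p => a * e p with hff
  have hΔ : A * aT - aT * A = Mmat n ℓ ff := by
    rw [hA, haT, Mmat_mul hn, Mmat_mul hn, show (ℓ + (r:ℤ)) + (-(r:ℤ)) = ℓ by ring,
      show (-(r:ℤ)) + (ℓ + (r:ℤ)) = ℓ by ring, Mmat_sub]
    refine congrArg (Mmat n ℓ) ?_
    funext p
    show c p * a - a * c (p + (((-(r:ℤ)) : ℤ) : ZMod n)) = ff p
    have hcast : (((-(r:ℤ)) : ℤ) : ZMod n) = -((r:ℕ) : ZMod n) := by push_cast; ring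
    rw [hcast, ← sub_eq_add_neg]
    show c p * a - a * c (p - ((r:ℕ) : ZMod n)) = a * e p
    rw [← hc p]
    ring
  set Δ : Matrix (Fin n) (Fin n) F := Mmat n ℓ ff with hΔdef
  have hΔmem : iwahoriMem n ℓ Δ := Mmat_mem hn _ _
  set W : Matrix (Fin n) (Fin n) F := B - aT with hW
  set S : Matrix (Fin n) (Fin n) F := A * W - W * A with hS
  have hSmem : iwahoriMem n (ℓ + 1) S := by
    have h1 := iwa_mul hAmem hB1
    have h2 := iwa_mul hB1 hAmem
    rw [show (ℓ + (r:ℤ)) + (-(r:ℤ)+1) = ℓ + 1 by ring] at h1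
    rw [show (-(r:ℤ)+1) + (ℓ + (r:ℤ)) = ℓ + 1 by ring] at h2
    exact iwa_sub h1 h2
  set R : Matrix (Fin n) (Fin n) F := Δ * (u - 1) + S * u with hR
  have hRmem : iwahoriMem n (ℓ + 1) R := by
    refine iwa_add ?_ ?_
    · have := iwa_mul hΔmem humem
      exact this
    · have hSu : S * (u - 1) = S * u - S := by rw [mul_sub, mul_one]
      have : S * u = S + S * (u - 1) := by rw [hSu]; abel
      rw [this]
      exact iwa_add hSmem (iwa_mono (by omega) (iwa_mul hSmem humem))
  have hB'eq : g * B * u = B + Δ + R := by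
    have hgBu : g * B - B * g = A * B - B * A := by
      rw [hg, add_mul, mul_add, one_mul, mul_one]
      abel
    have h1 : g * B * u - B = (A * B - B * A) * u := by
      have hB : B = B * (g * u) := by rw [hgu, mul_one]
      calc g * B * u - B = g * B * u - B * (g * u) := by rw [← hB]
        _ = (g * B - B * g) * u := by rw [sub_mul, ← mul_assoc B g u]
        _ = (A * B - B * A) * u := by rw [hgBu]
    have h2 : A * B - B * A = Δ + S := by
      rw [hS, hW, ← hΔ, mul_sub, sub_mul]
      abel
    rw [sub_eq_iff_eq_add] at h1
    have hΔu : Δ * u = Δ + Δ * (u - 1) := by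
      rw [mul_sub, mul_one]
      abel
    rw [h1, h2, hR, add_mul, hΔu]
    abel
  refine ⟨g, u, hgu, hug, hgmem, humem, ?_, ?_⟩
  · rw [hB'eq]
    have : B + Δ + R - aT = W + Δ + R := by rw [hW]; abel
    rw [this]
    exact iwa_add (iwa_add hB1 (iwa_mono (by omega) hΔmem))
      (iwa_mono (by omega) hRmem)
  · intro i j hij
    rw [hB'eq, coeff0_entry_add3]
    have hRc : (R i j).coeff 0 = 0 := by
      apply hRmem i j 0
      push_cast
      omega
    rcases lt_or_ge (((j:ℕ):ℤ) - ((i:ℕ):ℤ)) ℓ with hlt | hge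
    · have hΔc : (Δ i j).coeff 0 = 0 := by
        apply hΔmem i j 0
        push_cast
        omega
      rw [hΔc, hRc, hB2 i j hlt, add_zero, add_zero]
    · have heq : ((j:ℕ):ℤ) - ((i:ℕ):ℤ) = ℓ := by omega
      have hΔc : (Δ i j).coeff 0 = a * e (((i:ℕ)) : ZMod n) := by
        rw [hΔdef, Mmat_coeff hn, if_pos (by omega), hff]
      rw [hΔc, hRc, hK2 i j heq, add_zero]
      ring

lemma coeff0_trace (B : Matrix (Fin n) (Fin n) F) :
    (Matrix.trace B).coeff 0 = ∑ i : Fin n, (B i i).coeff 0 := by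
  rw [Matrix.trace]
  exact map_sum (cf 0) _ _

lemma main_ind {n r : ℕ} [NeZero n] (hn : 0 < n) (hr : 0 < r) (hcop : Nat.Coprime r n)
    {a : ℂ} (ha : a ≠ 0) (target : Fin n → Fin n → ℂ)
    (α : Matrix (Fin n) (Fin n) F)
    (hα1 : iwahoriMem n (-(r:ℤ)+1) (α - Mmat n (-(r:ℤ)) (fun _ => a)))
    (hα2 : ∀ i j : Fin n, ((j:ℕ):ℤ) - ((i:ℕ):ℤ) < -(r:ℤ)+1 → (α i j).coeff 0 = target i j)
    (htt : ∑ i : Fin n, target i i = (Matrix.trace α).coeff 0) :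
    ∀ N : ℕ, ∃ h u : Matrix (Fin n) (Fin n) F, h * u = 1 ∧ u * h = 1 ∧
      iwahoriMem n 1 (h - 1) ∧ iwahoriMem n 1 (u - 1) ∧
      iwahoriMem n (-(r:ℤ)+1) (h*α*u - Mmat n (-(r:ℤ)) (fun _ => a)) ∧
      (∀ i j : Fin n, ((j:ℕ):ℤ) - ((i:ℕ):ℤ) < -(r:ℤ)+1+(N:ℤ) →
        ((h*α*u) i j).coeff 0 = target i j) := by
  intro N
  induction N with
  | zero =>
    refine ⟨1, 1, one_mul 1, one_mul 1, ?_, ?_, ?_, ?_⟩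
    · intro i j k _
      show ((1 - 1 : Matrix (Fin n) (Fin n) F) i j).coeff k = 0
      rw [sub_self]
      rfl
    · intro i j k _
      show ((1 - 1 : Matrix (Fin n) (Fin n) F) i j).coeff k = 0
      rw [sub_self]
      rfl
    · rw [one_mul, mul_one]; exact hα1
    · rw [one_mul, mul_one]
      intro i j hij
      exact hα2 i j (by push_cast at hij ⊢; omega)
  | succ N ih =>
    obtain ⟨h, u, hhu, huh, hh1, hu1, hc1, hc2⟩ := ih
    set B : Matrix (Fin n) (Fin n) F := h * α * u with hB
    have htrB : Matrix.trace B = Matrix.trace α := by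
      rw [hB, Matrix.trace_mul_comm (h * α) u, ← mul_assoc, huh, one_mul]
    have htr0 : ∑ i : Fin n, (B i i).coeff 0 = ∑ i : Fin n, target i i := by
      rw [← coeff0_trace, htrB, htt]
    set ℓ : ℤ := -(r:ℤ)+1+(N:ℤ) with hℓdef
    obtain ⟨g, v, hgv, hvg, hg1, hv1, hd1, hd2⟩ :=
      step_lemma hn hr hcop ha target ℓ (by omega) B hc1
        (fun i j hij => hc2 i j hij) htr0
    refine ⟨g * h, u * v, ?_, ?_, iwa1_mul_group hn hg1 hh1, iwa1_mul_group hn hu1 hv1,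
      ?_, ?_⟩
    · rw [mul_assoc, ← mul_assoc h u v, hhu, one_mul, hgv]
    · rw [mul_assoc, ← mul_assoc v g h, hvg, one_mul, huh]
    · have hassoc : (g * h) * α * (u * v) = g * B * v := by
        rw [hB, mul_assoc g h α, mul_assoc g (h*α) (u*v), ← mul_assoc (h*α) u v,
          ← mul_assoc g ((h*α)*u) v]
      rw [hassoc]
      exact hd1
    · intro i j hij
      have hassoc : (g * h) * α * (u * v) = g * B * v := by
        rw [hB, mul_assoc g h α, mul_assoc g (h*α) (u*v), ← mul_assoc (h*α) u v,
          ← mul_assoc g ((h*α)*u) v]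
      rw [hassoc]
      exact hd2 i j (by push_cast at hij ⊢; omega)


/-- If `α = a·ω^{-r} + X` with `a ≠ 0` and `X ∈ 𝔦^{-r+1}`, and `D` is a diagonal
complex matrix whose trace is the `z⁰`-coefficient of `Tr(α)`, then there is
`h ∈ I¹` with `Res(h α h⁻¹ dz/z) = Res(a·ω^{-r} dz/z) + D`. -/
theorem stmt11 (r n : ℕ) (hr : 0 < r) (hn : 0 < n) (hcop : Nat.Coprime r n)
    (a : ℂ) (ha : a ≠ 0)
    (X : Matrix (Fin n) (Fin n) F) (hX : iwahoriMem n (-(r : ℤ) + 1) X)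
    (D : Matrix (Fin n) (Fin n) ℂ) (d : Fin n → ℂ) (hD : D = Matrix.diagonal d)
    (htr : Matrix.trace D
      = (Matrix.trace (algebraMap ℂ F a • (omegaInv n) ^ r + X)).coeff 0) :
    ∃ h : Matrix (Fin n) (Fin n) F,
      iwahoriMem n 1 (h - 1) ∧
      resMat n (h * (algebraMap ℂ F a • (omegaInv n) ^ r + X) * h⁻¹)
        = resMat n (algebraMap ℂ F a • (omegaInv n) ^ r) + D := by

  haveI : NeZero n := ⟨hn.ne'⟩
  set aT : Matrix (Fin n) (Fin n) F := Mmat n (-(r:ℤ)) (fun _ => a) with haT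
  have hsmul : algebraMap ℂ F a • (omegaInv n) ^ r = aT := by
    rw [omegaInv_pow hn r, algebraMap_smul_Mmat, haT]
    refine congrArg (Mmat n (-(r:ℤ))) ?_
    funext p
    exact mul_one a
  set α : Matrix (Fin n) (Fin n) F := algebraMap ℂ F a • (omegaInv n) ^ r + X with hα
  have hαeq : α = aT + X := by rw [hα, hsmul]
  set target : Fin n → Fin n → ℂ := fun i j => (aT i j).coeff 0 + D i j with htarget
  have haTdiag : ∀ i : Fin n, (aT i i).coeff 0 = 0 := by
    intro i
    rw [haT, Mmat_coeff hn, if_neg (by omega)]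
  have hα1 : iwahoriMem n (-(r:ℤ)+1) (α - aT) := by
    have : α - aT = X := by rw [hαeq]; exact add_sub_cancel_left aT X
    rw [this]
    exact hX
  have hα2 : ∀ i j : Fin n, ((j:ℕ):ℤ) - ((i:ℕ):ℤ) < -(r:ℤ)+1 →
      (α i j).coeff 0 = target i j := by
    intro i j hij
    have hXc : (X i j).coeff 0 = 0 := by
      apply hX i j 0
      push_cast
      omega
    have hDij : D i j = 0 := by
      rw [hD]
      apply Matrix.diagonal_apply_ne
      intro hc
      subst hc
      omega
    rw [hαeq]
    show ((aT + X) i j).coeff 0 = _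
    rw [Matrix.add_apply, HahnSeries.coeff_add, hXc, add_zero, htarget]
    show (aT i j).coeff 0 = (aT i j).coeff 0 + D i j
    rw [hDij, add_zero]
  have htt : ∑ i : Fin n, target i i = (Matrix.trace α).coeff 0 := by
    rw [htarget]
    have : ∑ i : Fin n, ((aT i i).coeff 0 + D i i) = ∑ i : Fin n, D i i := by
      refine Finset.sum_congr rfl fun i _ => ?_
      rw [haTdiag i, zero_add]
    rw [this]
    have htrD : Matrix.trace D = ∑ i : Fin n, D i i := rfl
    rw [← htrD, htr]
  obtain ⟨h, u, hhu, huh, hh1, hu1, hc1, hc2⟩ :=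
    main_ind hn hr hcop ha target α hα1 hα2 htt (n + r - 1)
  refine ⟨h, hh1, ?_⟩
  have hinv : (h : Matrix (Fin n) (Fin n) F)⁻¹ = u := Matrix.inv_eq_right_inv hhu
  rw [hinv]
  refine Matrix.ext fun i j => ?_
  have hfin : ((h*α*u) i j).coeff 0 = target i j := by
    apply hc2 i j
    have hi := i.isLt
    have hj := j.isLt
    push_cast
    omega
  show ((h*α*u) i j).coeff 0 = _
  rw [hfin, htarget]
  show (aT i j).coeff 0 + D i j = resMat n (algebraMap ℂ F a • (omegaInv n) ^ r) i j + D i j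
  rw [hsmul]
  rfl
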